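/- Let n ≥ 3 and k ≥ 0 be integers and let L > 1 be a real number. A real number σ has the property that there exist real numbers a, b, not both zero, such that the function u(r) = a·r^k + b·r^{2−n−k} satisfies u′(L) = 0 and u′(1) = −σ·u(1), if and only if σ = k·(n+k−2)·(L^{n+2k−2} − 1)/(k·L^{n+2k−2} + (n+k−2)). -/

import Mathlib

/-! The boundary conditions are linear in `(a, b)`. With `t = L^(n+2k-2)` and `m = n+k-2`,
`u'(L) = 0` reads `k t a - m b = 0` (after factoring out `L^(1-n-k)`) and `u'(1) = -σ u(1)` reads
`(k+σ) a + (σ-m) b = 0`. A nonzero solution exists iff the determinant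
`σ (k t + m) - k m (t - 1)` vanishes, and `k t + m > 0` because `n ≥ 3`. -/

theorem exists_ne_zero_solution_iff_det_eq_zero {K : Type*} [Field K] (p q r s : K) :
    (∃ a b : K, ¬(a = 0 ∧ b = 0) ∧ p * a + q * b = 0 ∧ r * a + s * b = 0) ↔
      p * s - q * r = 0 := by
  rw [← Matrix.det_fin_two_of, ← Matrix.exists_mulVec_eq_zero_iff]
  constructor
  · rintro ⟨a, b, hab, h₁, h₂⟩
    refine ⟨![a, b], fun h => hab ⟨congrFun h 0, congrFun h 1⟩, ?_⟩
    ext i; fin_cases i <;> simp [Matrix.mulVec, dotProduct, Fin.sum_univ_two, h₁, h₂]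
  · rintro ⟨v, hv, h⟩
    refine ⟨v 0, v 1, fun hv' => hv (funext fun i => by fin_cases i <;> simp [hv']), ?_, ?_⟩
    · simpa [Matrix.mulVec, dotProduct, Fin.sum_univ_two] using congrFun h 0
    · simpa [Matrix.mulVec, dotProduct, Fin.sum_univ_two] using congrFun h 1

theorem deriv_const_mul_zpow_add_const_mul_zpow {𝕜 : Type*} [NontriviallyNormedField 𝕜]
    (a b : 𝕜) (p q : ℤ) {x : 𝕜} (hx : x ≠ 0) :
    deriv (fun r : 𝕜 => a * r ^ p + b * r ^ q) x =
      a * p * x ^ (p - 1) + b * q * x ^ (q - 1) := by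
  have hp := (hasDerivAt_zpow p x (Or.inl hx)).const_mul a
  have hq := (hasDerivAt_zpow q x (Or.inl hx)).const_mul b
  have h : HasDerivAt (fun r : 𝕜 => a * r ^ p + b * r ^ q) _ x := hp.add hq
  rw [h.deriv, mul_assoc, mul_assoc]

/-- Characterization of the mixed Steklov–Neumann eigenvalues on the annulus
`B_L \ B̄_1 ⊂ ℝⁿ`: a real number `σ` admits a nonzero radial part
`u(r) = a·r^k + b·r^(2−n−k)` with `u′(L) = 0` and `u′(1) = −σ·u(1)` iff
`σ = k·(n+k−2)·(L^(n+2k−2) − 1) / (k·L^(n+2k−2) + (n+k−2))`. -/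
theorem stmt_1 (n k : ℕ) (hn : 3 ≤ n) (L : ℝ) (hL : 1 < L) (σ : ℝ) :
    (∃ a b : ℝ, ¬ (a = 0 ∧ b = 0) ∧
      deriv (fun r : ℝ => a * r ^ (k : ℤ) + b * r ^ ((2 : ℤ) - n - k)) L = 0 ∧
      deriv (fun r : ℝ => a * r ^ (k : ℤ) + b * r ^ ((2 : ℤ) - n - k)) 1 =
        -σ * (a * (1 : ℝ) ^ (k : ℤ) + b * (1 : ℝ) ^ ((2 : ℤ) - n - k))) ↔
    σ = (k : ℝ) * ((n : ℝ) + k - 2) * (L ^ ((n : ℤ) + 2 * k - 2) - 1) /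
        ((k : ℝ) * L ^ ((n : ℤ) + 2 * k - 2) + ((n : ℝ) + k - 2)) := by
  have hL₀ : L ≠ 0 := (zero_lt_one.trans hL).ne'
  set t := L ^ ((n : ℤ) + 2 * k - 2) with ht
  set m : ℝ := n + k - 2
  have hm : 0 < m := by
    have : (3 : ℝ) ≤ n := by exact_mod_cast hn
    linarith [k.cast_nonneg (α := ℝ)]
  have hL_split : L ^ ((k : ℤ) - 1) = L ^ ((2 : ℤ) - n - k - 1) * t := by
    rw [ht, ← zpow_add₀ hL₀]
    ring_nf
  calc _ ↔ ∃ a b : ℝ, ¬(a = 0 ∧ b = 0) ∧ (k * t) * a + (-m) * b = 0 ∧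
          (k + σ) * a + (σ - m) * b = 0 := by
        refine exists₂_congr fun a b => and_congr_right' (and_congr ?_ ?_)
        · rw [deriv_const_mul_zpow_add_const_mul_zpow _ _ _ _ hL₀, hL_split,
            ← mul_eq_zero_iff_left (zpow_ne_zero ((2 : ℤ) - n - k - 1) hL₀)
              (b := k * t * a + -m * b)]
          push_cast
          constructor <;> intro h <;> linear_combination h
        · rw [deriv_const_mul_zpow_add_const_mul_zpow _ _ _ _ one_ne_zero]
          simp only [one_zpow, mul_one]
          push_cast
          constructor <;> intro h <;> linear_combination h
    _ ↔ (k * t) * (σ - m) - (-m) * (k + σ) = 0 := exists_ne_zero_solution_iff_det_eq_zero ..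
    _ ↔ _ := by
        have hden : 0 < k * t + m := by positivity
        rw [eq_div_iff hden.ne']
        constructor <;> intro h <;> linear_combination h
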